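/- Let G be a finite group acting on finite sets S and A, and let R : S × A → ℝ and T : S × A × S → ℝ satisfy R(g·s, g·a) = R(s,a) and T(g·s, g·a, g·s') = T(s,a,s') for all g ∈ G. Define the Bellman operator (BQ)(s,a) = R(s,a) + γ · max over a' of Σ_{s'} T(s,a,s')·Q(s',a'), with 0 ≤ γ. Then B maps G-invariant functions Q (i.e. Q(g·s,g·a)=Q(s,a)) to G-invariant functions. -/

import Mathlib

section Invariance

variable {G S A : Type*} [Group G] [Fintype S] [MulAction G S] [MulAction G A]
  {T : S → A → S → ℝ} {Q : S → A → ℝ}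

theorem sum_transition_mul_smul
    (hT : ∀ (g : G) (s : S) (a : A) (s' : S), T (g • s) (g • a) (g • s') = T s a s')
    (hQ : ∀ (g : G) (s : S) (a : A), Q (g • s) (g • a) = Q s a) (g : G) (s : S) (a a' : A) :
    ∑ s' : S, T (g • s) (g • a) s' * Q s' (g • a') = ∑ s' : S, T s a s' * Q s' a' := by
  rw [← Equiv.sum_comp (MulAction.toPerm g)]
  simp only [MulAction.toPerm_apply, hT, hQ]

theorem iSup_sum_transition_mul_smul
    (hT : ∀ (g : G) (s : S) (a : A) (s' : S), T (g • s) (g • a) (g • s') = T s a s')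
    (hQ : ∀ (g : G) (s : S) (a : A), Q (g • s) (g • a) = Q s a) (g : G) (s : S) (a : A) :
    ⨆ a' : A, ∑ s' : S, T (g • s) (g • a) s' * Q s' a' = ⨆ a' : A, ∑ s' : S, T s a s' * Q s' a' := by
  rw [← Equiv.iSup_comp (MulAction.toPerm g)]
  simp only [MulAction.toPerm_apply, sum_transition_mul_smul hT hQ]

end Invariance

theorem stmt2_general {G S A : Type*} [Group G] [Fintype S]
    [MulAction G S] [MulAction G A]
    (R : S → A → ℝ) (T : S → A → S → ℝ) (γ : ℝ)
    (hR : ∀ (g : G) (s : S) (a : A), R (g • s) (g • a) = R s a)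
    (hT : ∀ (g : G) (s : S) (a : A) (s' : S), T (g • s) (g • a) (g • s') = T s a s')
    (Q : S → A → ℝ) (hQ : ∀ (g : G) (s : S) (a : A), Q (g • s) (g • a) = Q s a) :
    ∀ (g : G) (s : S) (a : A),
      (R (g • s) (g • a) + γ * ⨆ a' : A, ∑ s' : S, T (g • s) (g • a) s' * Q s' a')
        = R s a + γ * ⨆ a' : A, ∑ s' : S, T s a s' * Q s' a' := by
  intro g s a
  rw [hR, iSup_sum_transition_mul_smul hT hQ]

theorem stmt2 {G S A : Type*} [Group G] [Fintype G] [Fintype S] [Fintype A]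
    [Nonempty S] [Nonempty A] [MulAction G S] [MulAction G A]
    (R : S → A → ℝ) (T : S → A → S → ℝ) (γ : ℝ) (hγ : 0 ≤ γ)
    (hR : ∀ (g : G) (s : S) (a : A), R (g • s) (g • a) = R s a)
    (hT : ∀ (g : G) (s : S) (a : A) (s' : S), T (g • s) (g • a) (g • s') = T s a s')
    (Q : S → A → ℝ) (hQ : ∀ (g : G) (s : S) (a : A), Q (g • s) (g • a) = Q s a) :
    ∀ (g : G) (s : S) (a : A),
      (R (g • s) (g • a) + γ * ⨆ a' : A, ∑ s' : S, T (g • s) (g • a) s' * Q s' a')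
        = R s a + γ * ⨆ a' : A, ∑ s' : S, T s a s' * Q s' a' :=
  stmt2_general R T γ hR hT Q hQ
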